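/- Let (F, ≺) be an IS-family with minimum element sm(F) and E_x the set of elements of excess at most x. Then |⋃_{S ∈ E_x} S| ≤ 2^{x+1} · |sm(F)|. -/

import Mathlib

/-- A family of subsets of a finite set `V` with a strict partial order. -/
structure ISFamily (V : Type*) [DecidableEq V] [Fintype V] where
  F : Finset (Finset V)
  prec : Finset V → Finset V → Prop
  prec_trans : ∀ {a b c : Finset V}, prec a b → prec b c → prec a c
  prec_irrefl : ∀ a : Finset V, ¬ prec a a

namespace ISFamily

variable {V : Type*} [DecidableEq V] [Fintype V] (Fam : ISFamily V)

/-- The immediate predecessors of `S` in the family. -/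
def Pred (S : Finset V) : Set (Finset V) :=
  {S' | S' ∈ Fam.F ∧ Fam.prec S' S ∧
    ¬ ∃ S'' ∈ Fam.F, Fam.prec S' S'' ∧ Fam.prec S'' S}

/-- `S'` covers `v` if some member of the family preceding `S'` contains `v` while
`S'` does not. -/
def Covers (S' : Finset V) (v : V) : Prop :=
  ∃ S'' ∈ Fam.F, Fam.prec S'' S' ∧ v ∈ S'' ∧ v ∉ S'

/-- The visible set of `S`: vertices belonging to some immediate predecessor of `S`
and not covered by any immediate predecessor of `S`. -/
def Vis (S : Finset V) : Set V :=
  {v | (∃ S' ∈ Fam.Pred S, v ∈ S') ∧ ∀ S' ∈ Fam.Pred S, ¬ Fam.Covers S' v}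

/-- `hat S = S \ ⋃_{S' ≺ S} S'`. -/
def hat (S : Finset V) : Set V :=
  ↑S \ ⋃ S' ∈ {S' | S' ∈ Fam.F ∧ Fam.prec S' S}, (↑S' : Set V)

/-- `W` is a witness of `v` w.r.t. `S`: a minimal element of the family with
`S ≺ W` and `v ∉ W`. -/
def IsWitness (S : Finset V) (v : V) (W : Finset V) : Prop :=
  W ∈ Fam.F ∧ Fam.prec S W ∧ v ∉ W ∧
    ∀ W' ∈ Fam.F, Fam.prec S W' → v ∉ W' → ¬ Fam.prec W' W

/-- The axioms making `(F, ≺)` an IS-family with smallest element `sm`. -/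
structure IsIS (sm : Finset V) : Prop where
  sm_mem : sm ∈ Fam.F
  SE : ∀ S ∈ Fam.F, S ≠ sm → Fam.prec sm S
  SM : ∀ S₁ ∈ Fam.F, ∀ S₂ ∈ Fam.F, Fam.prec S₁ S₂ → S₁.card < S₂.card
  SW : ∀ S ∈ Fam.F, ∀ v ∈ S, ∀ W₁ W₂ : Finset V,
    Fam.IsWitness S v W₁ → Fam.IsWitness S v W₂ → W₁ = W₂
  TE : ∀ S₁ ∈ Fam.F, ∀ S₂ ∈ Fam.F, ∀ S₃ ∈ Fam.F,
    Fam.prec S₁ S₂ → Fam.prec S₂ S₃ → ∀ v ∈ S₁, v ∉ S₂ → v ∉ S₃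
  LVS : ∀ S ∈ Fam.F, ∀ S' ∈ Fam.Pred S, S'.card ≤ (Fam.Vis S).ncard
  DVS : ∀ S ∈ Fam.F, S ≠ sm → ¬ (Fam.Vis S ⊆ ↑S)

/-- The excess of `S` relative to the smallest element `sm`. -/
def ex (sm S : Finset V) : ℕ := S.card - sm.card

/-- The members of the family of excess at most `x`. -/
def Ex (sm : Finset V) (x : ℕ) : Finset (Finset V) :=
  Fam.F.filter (fun S => ex sm S ≤ x)

/-- The `x`-hat of `S`: elements of `hat S` not excluded by any member of `E_x`
succeeding `S`. -/
def hatx (sm : Finset V) (x : ℕ) (S : Finset V) : Set V :=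
  {v ∈ Fam.hat S | ¬ ∃ S' ∈ Fam.Ex sm x, Fam.prec S S' ∧ v ∉ S'}

/-- `M(x) = Σ_{S ∈ E_x} 2^{x - ex(S)} · |hat_x(S)|`. -/
noncomputable def M (sm : Finset V) (x : ℕ) : ℕ :=
  ∑ S ∈ Fam.Ex sm x, 2 ^ (x - ex sm S) * (Fam.hatx sm x S).ncard

end ISFamily

/-! The potential `M x = ∑_{S ∈ E_x} 2 ^ (x - ex S) * |hatx x S|` satisfies `M 0 ≤ |sm|` and
`M (x + 1) ≤ 2 * M x`. For the doubling step, let `S` have excess `x + 1`. Every `u ∈ Vis S \ S`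
lies in the hat of some `T_u ≺ S` with `|T_u| ≤ |Vis S|` (LVS), and `S` is then the unique (SW)
witness of `(T_u, u)`; so `u` leaves `hatx · T_u` exactly between `x` and `x + 1`, and
`(S, u) ↦ (T_u, u)` is injective. Together with DVS this gives
`|hat S| ≤ ∑_{u ∈ Vis S \ S} 2 ^ (x + 1 - ex T_u)`: the hats of the sets of excess `x + 1` are
paid for by the vertices leaving the sets `hatx x T`. A vertex first reached at excess `x + 1`
lies in such a hat, since everything below a set has smaller excess; hence
`|⋃ E_{x+1}| ≤ |⋃ E_x| + 2 * M x ≤ |⋃ E_x| + 2 ^ (x + 1) * |sm|`. -/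

theorem Finset.sum_sum_le_sum_card_nsmul {ι κ α M : Type*} [AddCommMonoid M] [Preorder M]
    [CanonicallyOrderedAdd M] {s : Finset ι} {A : ι → Finset α} {t : Finset κ}
    {B : κ → Finset α} (e : ι → α → κ) (w : κ → M)
    (hmaps : ∀ i ∈ s, ∀ a ∈ A i, e i a ∈ t ∧ a ∈ B (e i a))
    (hinj : ∀ i ∈ s, ∀ j ∈ s, ∀ a ∈ A i, a ∈ A j → e i a = e j a → i = j) :
    ∑ i ∈ s, ∑ a ∈ A i, w (e i a) ≤ ∑ k ∈ t, (B k).card • w k := by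
  classical
  set f : (_ : ι) × α → (_ : κ) × α := fun p => ⟨e p.1 p.2, p.2⟩
  have hf : Set.InjOn f ↑(s.sigma A) := by
    rintro ⟨i, a⟩ hp ⟨j, b⟩ hq heq
    obtain ⟨he, rfl⟩ := Sigma.mk.inj_iff.mp heq
    obtain ⟨hi, ha⟩ := Finset.mem_sigma.mp hp
    obtain ⟨hj, hb⟩ := Finset.mem_sigma.mp hq
    rw [hinj i hi j hj a ha hb he]
  calc ∑ i ∈ s, ∑ a ∈ A i, w (e i a)
      = ∑ p ∈ s.sigma A, w (f p).1 := by rw [Finset.sum_sigma]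
    _ = ∑ q ∈ (s.sigma A).image f, w q.1 := by rw [Finset.sum_image hf]
    _ ≤ ∑ q ∈ t.sigma B, w q.1 := by
        refine Finset.sum_le_sum_of_subset (Finset.image_subset_iff.mpr ?_)
        rintro ⟨i, a⟩ hp
        obtain ⟨hi, ha⟩ := Finset.mem_sigma.mp hp
        exact Finset.mem_sigma.mpr (hmaps i hi a ha)
    _ = ∑ k ∈ t, (B k).card • w k := by
        rw [Finset.sum_sigma]
        exact Finset.sum_congr rfl fun k _ => Finset.sum_const (w k)

namespace ISFamily

variable {V : Type*} [DecidableEq V] [Fintype V] {Fam : ISFamily V} {sm : Finset V}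

theorem mem_hat {S : Finset V} {v : V} :
    v ∈ Fam.hat S ↔ v ∈ S ∧ ∀ Z ∈ Fam.F, Fam.prec Z S → v ∉ Z := by
  simp [hat]

theorem mem_Ex {x : ℕ} {S : Finset V} : S ∈ Fam.Ex sm x ↔ S ∈ Fam.F ∧ ex sm S ≤ x :=
  Finset.mem_filter

theorem hatx_subset_hat {x : ℕ} {S : Finset V} : Fam.hatx sm x S ⊆ Fam.hat S :=
  fun _ hv => hv.1

theorem hatx_succ_subset {x : ℕ} {S : Finset V} :
    Fam.hatx sm (x + 1) S ⊆ Fam.hatx sm x S := by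
  rintro v ⟨hv, hnot⟩
  refine ⟨hv, fun ⟨W, hW, hSW, hvW⟩ => hnot ⟨W, ?_, hSW, hvW⟩⟩
  rw [mem_Ex] at hW ⊢
  exact ⟨hW.1, by omega⟩

theorem Ex_succ (x : ℕ) :
    Fam.Ex sm (x + 1) = Fam.Ex sm x ∪ Fam.F.filter (fun S => ex sm S = x + 1) := by
  rw [Ex, Ex, ← Finset.filter_or]
  exact Finset.filter_congr fun S _ => by omega

theorem disjoint_Ex_filter_ex_eq (x : ℕ) :
    Disjoint (Fam.Ex sm x) (Fam.F.filter (fun S => ex sm S = x + 1)) := by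
  rw [Finset.disjoint_left]
  intro S h₁ h₂
  rw [mem_Ex] at h₁
  rw [Finset.mem_filter] at h₂
  omega

theorem ncard_hat_add_ncard_Vis_inter_le (S : Finset V) :
    (Fam.hat S).ncard + (Fam.Vis S ∩ ↑S).ncard ≤ S.card := by
  have hdisj : Disjoint (Fam.hat S) (Fam.Vis S ∩ ↑S) := by
    refine Set.disjoint_left.mpr fun v hv ⟨hvis, _⟩ => ?_
    obtain ⟨T, hT, hvT⟩ := hvis.1
    exact (mem_hat.mp hv).2 T hT.1 hT.2.1 hvT
  rw [← Set.ncard_union_eq hdisj, ← Set.ncard_coe_finset S]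
  exact Set.ncard_le_ncard (Set.union_subset (fun v hv => (mem_hat.mp hv).1)
    Set.inter_subset_right)

theorem two_mul_M (x : ℕ) :
    2 * Fam.M sm x = ∑ T ∈ Fam.Ex sm x, 2 ^ (x + 1 - ex sm T) * (Fam.hatx sm x T).ncard := by
  rw [M, Finset.mul_sum]
  refine Finset.sum_congr rfl fun T hT => ?_
  rw [show x + 1 - ex sm T = x - ex sm T + 1 by have := (mem_Ex.mp hT).2; omega, pow_succ]
  ring

namespace IsIS

theorem card_le (hIS : Fam.IsIS sm) {S : Finset V} (hS : S ∈ Fam.F) : sm.card ≤ S.card := by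
  by_cases h : S = sm
  · rw [h]
  · exact (hIS.SM sm hIS.sm_mem S hS (hIS.SE S hS h)).le

theorem card_eq_add_ex (hIS : Fam.IsIS sm) {S : Finset V} (hS : S ∈ Fam.F) :
    S.card = sm.card + ex sm S := by
  have := hIS.card_le hS
  unfold ex
  omega

theorem ex_lt_ex (hIS : Fam.IsIS sm) {S T : Finset V} (hT : T ∈ Fam.F) (hS : S ∈ Fam.F)
    (h : Fam.prec T S) : ex sm T < ex sm S := by
  have := hIS.SM T hT S hS h
  have := hIS.card_le hT
  unfold ex
  omega

theorem Ex_zero (hIS : Fam.IsIS sm) : Fam.Ex sm 0 = {sm} := by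
  ext S
  rw [mem_Ex, Finset.mem_singleton]
  constructor
  · rintro ⟨hS, hex⟩
    by_contra hne
    have := hIS.ex_lt_ex hIS.sm_mem hS (hIS.SE S hS hne)
    rw [ex, Nat.sub_self] at this
    omega
  · rintro rfl
    exact ⟨hIS.sm_mem, by simp [ex]⟩

theorem exists_minimal (hIS : Fam.IsIS sm) (P : Finset V → Prop) {Z : Finset V}
    (hZ : Z ∈ Fam.F) (hPZ : P Z) :
    ∃ W ∈ Fam.F, P W ∧ W.card ≤ Z.card ∧ ∀ W' ∈ Fam.F, P W' → ¬ Fam.prec W' W := by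
  classical
  obtain ⟨W, hW, hmin⟩ := Finset.exists_min_image (Fam.F.filter P) Finset.card
    ⟨Z, Finset.mem_filter.mpr ⟨hZ, hPZ⟩⟩
  rw [Finset.mem_filter] at hW
  refine ⟨W, hW.1, hW.2, hmin Z (Finset.mem_filter.mpr ⟨hZ, hPZ⟩), fun W' hW' hPW' hW'W => ?_⟩
  have := hmin W' (Finset.mem_filter.mpr ⟨hW', hPW'⟩)
  have := hIS.SM W' hW' W hW.1 hW'W
  omega

theorem exists_maximal (hIS : Fam.IsIS sm) (P : Finset V → Prop) {Z : Finset V}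
    (hZ : Z ∈ Fam.F) (hPZ : P Z) :
    ∃ W ∈ Fam.F, P W ∧ Z.card ≤ W.card ∧ ∀ W' ∈ Fam.F, P W' → ¬ Fam.prec W W' := by
  classical
  obtain ⟨W, hW, hmax⟩ := Finset.exists_max_image (Fam.F.filter P) Finset.card
    ⟨Z, Finset.mem_filter.mpr ⟨hZ, hPZ⟩⟩
  rw [Finset.mem_filter] at hW
  refine ⟨W, hW.1, hW.2, hmax Z (Finset.mem_filter.mpr ⟨hZ, hPZ⟩), fun W' hW' hPW' hWW' => ?_⟩
  have := hmax W' (Finset.mem_filter.mpr ⟨hW', hPW'⟩)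
  have := hIS.SM W hW.1 W' hW' hWW'
  omega

theorem exists_isWitness_card_le (hIS : Fam.IsIS sm) {S S' : Finset V} {v : V}
    (hS' : S' ∈ Fam.F) (hSS' : Fam.prec S S') (hv : v ∉ S') :
    ∃ W, Fam.IsWitness S v W ∧ W.card ≤ S'.card := by
  obtain ⟨W, hW, ⟨hSW, hvW⟩, hcard, hmin⟩ :=
    hIS.exists_minimal (fun W => Fam.prec S W ∧ v ∉ W) hS' ⟨hSS', hv⟩
  exact ⟨W, ⟨hW, hSW, hvW, fun W' hW' hSW' hvW' => hmin W' hW' ⟨hSW', hvW'⟩⟩, hcard⟩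

theorem exists_mem_Pred (hIS : Fam.IsIS sm) {S W : Finset V} (hW : W ∈ Fam.F)
    (hWS : Fam.prec W S) : ∃ T ∈ Fam.Pred S, W = T ∨ Fam.prec W T := by
  obtain ⟨T, hT, ⟨hWT, hTS⟩, -, hmax⟩ :=
    hIS.exists_maximal (fun T => (W = T ∨ Fam.prec W T) ∧ Fam.prec T S) hW ⟨Or.inl rfl, hWS⟩
  refine ⟨T, ⟨hT, hTS, fun ⟨Z, hZ, hTZ, hZS⟩ => hmax Z hZ ⟨?_, hZS⟩ hTZ⟩, hWT⟩
  rcases hWT with rfl | hWT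
  · exact Or.inr hTZ
  · exact Or.inr (Fam.prec_trans hWT hTZ)

theorem exists_mem_hat (hIS : Fam.IsIS sm) {S T : Finset V} {u : V} (hT : T ∈ Fam.F)
    (hTS : Fam.prec T S) (hu : u ∈ T) :
    ∃ T₀ ∈ Fam.F, Fam.prec T₀ S ∧ u ∈ Fam.hat T₀ ∧ T₀.card ≤ T.card := by
  obtain ⟨T₀, hT₀, ⟨hT₀S, huT₀⟩, hcard, hmin⟩ :=
    hIS.exists_minimal (fun Z => Fam.prec Z S ∧ u ∈ Z) hT ⟨hTS, hu⟩
  refine ⟨T₀, hT₀, hT₀S, mem_hat.mpr ⟨huT₀, fun Z hZ hZT₀ huZ => ?_⟩, hcard⟩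
  exact hmin Z hZ ⟨Fam.prec_trans hZT₀ hT₀S, huZ⟩ hZT₀

theorem exists_mem_hat_card_le_ncard_Vis (hIS : Fam.IsIS sm) {S : Finset V} (hS : S ∈ Fam.F)
    {u : V} (hu : u ∈ Fam.Vis S) :
    ∃ T₀ ∈ Fam.F, Fam.prec T₀ S ∧ u ∈ Fam.hat T₀ ∧ T₀.card ≤ (Fam.Vis S).ncard := by
  obtain ⟨⟨T, hT, huT⟩, -⟩ := hu
  obtain ⟨T₀, hT₀, hT₀S, hhat, hcard⟩ := hIS.exists_mem_hat hT.1 hT.2.1 huT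
  exact ⟨T₀, hT₀, hT₀S, hhat, hcard.trans (hIS.LVS S hS T hT)⟩

theorem isWitness_of_mem_Vis (hIS : Fam.IsIS sm) {S T₀ : Finset V} {u : V}
    (hS : S ∈ Fam.F) (hu : u ∈ Fam.Vis S) (huS : u ∉ S) (hT₀ : T₀ ∈ Fam.F)
    (hT₀S : Fam.prec T₀ S) (huT₀ : u ∈ T₀) : Fam.IsWitness T₀ u S := by
  refine ⟨hS, hT₀S, huS, fun W hW hT₀W huW hWS => ?_⟩
  obtain ⟨T, hT, hWT⟩ := hIS.exists_mem_Pred hW hWS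
  rcases hWT with rfl | hWT
  · exact hu.2 W hT ⟨T₀, hT₀, hT₀W, huT₀, huW⟩
  · by_cases huT : u ∈ T
    · exact hIS.TE T₀ hT₀ W hW T hT.1 hT₀W hWT u huT₀ huW huT
    · exact hu.2 T hT ⟨T₀, hT₀, Fam.prec_trans hT₀W hWT, huT₀, huT⟩

theorem card_le_of_isWitness (hIS : Fam.IsIS sm) {T₀ S W : Finset V} {u : V}
    (hT₀ : T₀ ∈ Fam.F) (huT₀ : u ∈ T₀) (hS : Fam.IsWitness T₀ u S) (hW : W ∈ Fam.F)
    (hT₀W : Fam.prec T₀ W) (huW : u ∉ W) : S.card ≤ W.card := by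
  obtain ⟨W₀, hW₀, hcard⟩ := hIS.exists_isWitness_card_le hW hT₀W huW
  rwa [hIS.SW T₀ hT₀ u huT₀ W₀ S hW₀ hS] at hcard

theorem mem_hatx_iff_of_isWitness (hIS : Fam.IsIS sm) {T₀ S : Finset V} {u : V}
    (hT₀ : T₀ ∈ Fam.F) (huT₀ : u ∈ T₀) (hS : Fam.IsWitness T₀ u S) (y : ℕ) :
    u ∈ Fam.hatx sm y T₀ ↔ u ∈ Fam.hat T₀ ∧ y < ex sm S := by
  refine ⟨fun ⟨hhat, hnot⟩ => ⟨hhat, ?_⟩, fun ⟨hhat, hlt⟩ => ⟨hhat, ?_⟩⟩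
  · by_contra! hle
    exact hnot ⟨S, mem_Ex.mpr ⟨hS.1, hle⟩, hS.2.1, hS.2.2.1⟩
  · rintro ⟨W, hW, hT₀W, huW⟩
    rw [mem_Ex] at hW
    have := hIS.card_le_of_isWitness hT₀ huT₀ hS hW.1 hT₀W huW
    have := hIS.card_eq_add_ex hS.1
    have := hIS.card_eq_add_ex hW.1
    omega

theorem exists_mem_hatx_sdiff_isWitness (hIS : Fam.IsIS sm) {S : Finset V} {u : V} {x : ℕ}
    (hS : S ∈ Fam.F) (hexS : ex sm S = x + 1) (hu : u ∈ Fam.Vis S) (huS : u ∉ S) :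
    ∃ T₀ ∈ Fam.Ex sm x, u ∈ Fam.hatx sm x T₀ \ Fam.hatx sm (x + 1) T₀ ∧ u ∈ T₀ ∧
      Fam.IsWitness T₀ u S ∧ T₀.card ≤ (Fam.Vis S).ncard := by
  obtain ⟨T₀, hT₀, hT₀S, hhat, hcard⟩ := hIS.exists_mem_hat_card_le_ncard_Vis hS hu
  have huT₀ := (mem_hat.mp hhat).1
  have hwit := hIS.isWitness_of_mem_Vis hS hu huS hT₀ hT₀S huT₀
  have hlt := hIS.ex_lt_ex hT₀ hS hT₀S
  refine ⟨T₀, mem_Ex.mpr ⟨hT₀, by omega⟩, ?_, huT₀, hwit, hcard⟩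
  simp only [Set.mem_sdiff, hIS.mem_hatx_iff_of_isWitness hT₀ huT₀ hwit, hhat, true_and]
  omega

theorem ncard_hat_le_sum (hIS : Fam.IsIS sm) {S : Finset V} (hS : S ∈ Fam.F) (hSsm : S ≠ sm)
    (A : Finset V) (hA : ↑A = Fam.Vis S \ ↑S) (g : V → Finset V)
    (hg : ∀ u ∈ A, g u ∈ Fam.F ∧ (g u).card ≤ (Fam.Vis S).ncard) :
    (Fam.hat S).ncard ≤ ∑ u ∈ A, 2 ^ (ex sm S - ex sm (g u)) := by
  -- `|hat S| ≤ |S| - |Vis S ∩ S| = |S| - |Vis S| + |A| ≤ ex S - ex (g u₀) + |A|` for any `u₀ ∈ A`;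
  -- the term of `u₀` exceeds `ex S - ex (g u₀)` and every other term is at least `1`.
  obtain ⟨u₀, hu₀⟩ : A.Nonempty := by
    rw [← Finset.coe_nonempty, hA, Set.sdiff_nonempty]
    exact hIS.DVS S hS hSsm
  have hA_card : (Fam.Vis S ∩ ↑S).ncard + A.card = (Fam.Vis S).ncard := by
    rw [← Set.ncard_coe_finset, hA, Set.ncard_inter_add_ncard_sdiff_eq_ncard]
  have hhat := ncard_hat_add_ncard_Vis_inter_le (Fam := Fam) S
  have hg₀ := hg u₀ hu₀
  have := hIS.card_eq_add_ex hS
  have := hIS.card_eq_add_ex hg₀.1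
  have hexp : ex sm S - ex sm (g u₀) < 2 ^ (ex sm S - ex sm (g u₀)) := Nat.lt_two_pow_self
  have hrest : (A.erase u₀).card ≤ ∑ u ∈ A.erase u₀, 2 ^ (ex sm S - ex sm (g u)) := by
    simpa using Finset.card_nsmul_le_sum (A.erase u₀) _ 1 fun u _ => Nat.one_le_two_pow
  rw [← Finset.add_sum_erase A _ hu₀]
  have := Finset.card_erase_add_one hu₀
  omega

theorem sum_ncard_hat_le (hIS : Fam.IsIS sm) (x : ℕ) :
    ∑ S ∈ Fam.F.filter (fun S => ex sm S = x + 1), (Fam.hat S).ncard ≤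
      ∑ T ∈ Fam.Ex sm x,
        2 ^ (x + 1 - ex sm T) * (Fam.hatx sm x T \ Fam.hatx sm (x + 1) T).ncard := by
  classical
  set D := Fam.F.filter (fun S => ex sm S = x + 1)
  set A : Finset V → Finset V := fun S => (Fam.Vis S \ ↑S).toFinset
  have hA {S : Finset V} {u : V} : u ∈ A S ↔ u ∈ Fam.Vis S ∧ u ∉ S := by simp [A]
  choose! t htEx hthatx htmem htwit htcard using fun S (hS : S ∈ D) u (hu : u ∈ A S) =>
    hIS.exists_mem_hatx_sdiff_isWitness (Finset.mem_filter.mp hS).1 (Finset.mem_filter.mp hS).2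
      (hA.mp hu).1 (hA.mp hu).2
  calc ∑ S ∈ D, (Fam.hat S).ncard
      ≤ ∑ S ∈ D, ∑ u ∈ A S, 2 ^ (x + 1 - ex sm (t S u)) := by
        refine Finset.sum_le_sum fun S hSD => ?_
        obtain ⟨hS, hexS⟩ := Finset.mem_filter.mp hSD
        have hSsm : S ≠ sm := by
          rintro rfl
          simp [ex] at hexS
        rw [← hexS]
        exact hIS.ncard_hat_le_sum hS hSsm (A S) (by simp [A]) (t S) fun u hu =>
          ⟨(mem_Ex.mp (htEx S hSD u hu)).1, htcard S hSD u hu⟩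
    _ ≤ ∑ T ∈ Fam.Ex sm x,
          ((Fam.hatx sm x T \ Fam.hatx sm (x + 1) T).toFinset).card • 2 ^ (x + 1 - ex sm T) := by
        refine Finset.sum_sum_le_sum_card_nsmul t (fun T => 2 ^ (x + 1 - ex sm T))
          (fun S hS u hu => ⟨htEx S hS u hu, Set.mem_toFinset.mpr (hthatx S hS u hu)⟩)
          fun S₁ hS₁ S₂ hS₂ u hu₁ hu₂ ht => ?_
        have hw₁ := htwit S₁ hS₁ u hu₁
        rw [ht] at hw₁
        exact hIS.SW _ (mem_Ex.mp (htEx S₂ hS₂ u hu₂)).1 u (htmem S₂ hS₂ u hu₂) S₁ S₂ hw₁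
          (htwit S₂ hS₂ u hu₂)
    _ = _ := by
        refine Finset.sum_congr rfl fun T _ => ?_
        rw [smul_eq_mul, mul_comm, Set.ncard_eq_toFinset_card']

theorem sum_ncard_hat_le_two_mul_M (hIS : Fam.IsIS sm) (x : ℕ) :
    ∑ S ∈ Fam.F.filter (fun S => ex sm S = x + 1), (Fam.hat S).ncard ≤ 2 * Fam.M sm x := by
  refine (hIS.sum_ncard_hat_le x).trans ?_
  rw [two_mul_M]
  exact Finset.sum_le_sum fun T _ => Nat.mul_le_mul_left _ (Set.ncard_le_ncard Set.sdiff_subset)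

theorem M_succ_le (hIS : Fam.IsIS sm) (x : ℕ) : Fam.M sm (x + 1) ≤ 2 * Fam.M sm x := by
  set D := Fam.F.filter (fun S => ex sm S = x + 1)
  set R := ∑ T ∈ Fam.Ex sm x, 2 ^ (x + 1 - ex sm T) * (Fam.hatx sm (x + 1) T).ncard
  calc Fam.M sm (x + 1)
      = R + ∑ S ∈ D, 2 ^ (x + 1 - ex sm S) * (Fam.hatx sm (x + 1) S).ncard := by
        rw [M, Ex_succ, Finset.sum_union (disjoint_Ex_filter_ex_eq x)]
    _ ≤ R + ∑ S ∈ D, (Fam.hat S).ncard := by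
        refine Nat.add_le_add_left (Finset.sum_le_sum fun S hS => ?_) _
        rw [(Finset.mem_filter.mp hS).2, Nat.sub_self, pow_zero, one_mul]
        exact Set.ncard_le_ncard hatx_subset_hat
    _ ≤ R + ∑ T ∈ Fam.Ex sm x,
          2 ^ (x + 1 - ex sm T) * (Fam.hatx sm x T \ Fam.hatx sm (x + 1) T).ncard :=
        Nat.add_le_add_left (hIS.sum_ncard_hat_le x) _
    _ = 2 * Fam.M sm x := by
        rw [two_mul_M, ← Finset.sum_add_distrib]
        refine Finset.sum_congr rfl fun T _ => ?_
        rw [← mul_add, Nat.add_comm (Set.ncard _),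
          Set.ncard_sdiff_add_ncard_of_subset hatx_succ_subset]

theorem M_le (hIS : Fam.IsIS sm) (x : ℕ) : Fam.M sm x ≤ 2 ^ x * sm.card := by
  induction x with
  | zero =>
    rw [M, hIS.Ex_zero, Finset.sum_singleton, ex, Nat.sub_self, pow_zero, one_mul, one_mul,
      ← Set.ncard_coe_finset sm]
    exact Set.ncard_le_ncard fun v hv => (mem_hat.mp (hatx_subset_hat hv)).1
  | succ n ih =>
    calc Fam.M sm (n + 1) ≤ 2 * Fam.M sm n := hIS.M_succ_le n
      _ ≤ 2 * (2 ^ n * sm.card) := Nat.mul_le_mul_left _ ih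
      _ = 2 ^ (n + 1) * sm.card := by ring

theorem ncard_biUnion_Ex_succ_le (hIS : Fam.IsIS sm) (n : ℕ) :
    (⋃ S ∈ Fam.Ex sm (n + 1), (↑S : Set V)).ncard ≤
      (⋃ S ∈ Fam.Ex sm n, (↑S : Set V)).ncard +
        ∑ S ∈ Fam.F.filter (fun S => ex sm S = n + 1), (Fam.hat S).ncard := by
  set D := Fam.F.filter (fun S => ex sm S = n + 1)
  have hsub : (⋃ S ∈ Fam.Ex sm (n + 1), (↑S : Set V)) ⊆
      (⋃ S ∈ Fam.Ex sm n, (↑S : Set V)) ∪ ⋃ S ∈ D, Fam.hat S := by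
    intro v hv
    simp only [Set.mem_iUnion, exists_prop, Ex_succ, Finset.mem_union] at hv
    obtain ⟨S, hS | hS, hvS⟩ := hv
    · exact Or.inl (Set.mem_biUnion hS hvS)
    by_contra hnot
    simp only [Set.mem_union, Set.mem_iUnion, exists_prop, not_or, not_exists, not_and] at hnot
    refine hnot.2 S hS (mem_hat.mpr ⟨hvS, fun Z hZ hZS hvZ => hnot.1 Z ?_ hvZ⟩)
    obtain ⟨hSF, hexS⟩ := Finset.mem_filter.mp hS
    exact mem_Ex.mpr ⟨hZ, by have := hIS.ex_lt_ex hZ hSF hZS; omega⟩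
  calc _ ≤ ((⋃ S ∈ Fam.Ex sm n, (↑S : Set V)) ∪ ⋃ S ∈ D, Fam.hat S).ncard :=
        Set.ncard_le_ncard hsub
    _ ≤ _ := (Set.ncard_union_le _ _).trans
        (Nat.add_le_add_left (D.set_ncard_biUnion_le _) _)

end IsIS

end ISFamily

open ISFamily in
/-- `|⋃_{S ∈ E_x} S| ≤ 2^{x+1} · |sm(F)|`. -/
theorem vertex_bound {V : Type*} [DecidableEq V] [Fintype V]
    (Fam : ISFamily V) (sm : Finset V) (hIS : Fam.IsIS sm) (x : ℕ) :
    (⋃ S ∈ Fam.Ex sm x, (↑S : Set V)).ncard ≤ 2 ^ (x + 1) * sm.card := by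
  induction x with
  | zero =>
    simp only [hIS.Ex_zero, Finset.mem_singleton, Set.iUnion_iUnion_eq_left, Set.ncard_coe_finset]
    omega
  | succ n ih =>
    calc _ ≤ (⋃ S ∈ Fam.Ex sm n, (↑S : Set V)).ncard +
          ∑ S ∈ Fam.F.filter (fun S => ex sm S = n + 1), (Fam.hat S).ncard :=
          hIS.ncard_biUnion_Ex_succ_le n
      _ ≤ 2 ^ (n + 1) * sm.card + 2 * (2 ^ n * sm.card) :=
          Nat.add_le_add ih ((hIS.sum_ncard_hat_le_two_mul_M n).trans
            (Nat.mul_le_mul_left _ (hIS.M_le n)))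
      _ = 2 ^ (n + 1 + 1) * sm.card := by ring
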